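/- arXiv:2502.06777 — 2 statements merged into one kernel-verified Lean document; each statement's English description precedes it below -/
import Mathlib

section
/- Let K ≥ 1 and 0 < ε ≤ 1/(4K). Consider two probability distributions p, q on the index set {0, ℓ, s₁, ..., s_{K−1}} given by the MNL choice probabilities: under p, item ℓ has attraction 1/K + ε and each s_i has attraction 1 (and the outside option has attraction 1), so p_0 = 1/(K + 1/K + ε), p_ℓ = (1/K + ε)/(K + 1/K + ε), p_{s_i} = 1/(K + 1/K + ε); under q, ℓ has attraction 1/K, so q_0 = q_{s_i} = 1/(K + 1/K), q_ℓ = (1/K)/(K + 1/K). Then ∑_j (p_j − q_j)²/q_j ≤ 5ε². -/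
theorem stmt_9 (K : ℕ) (hK : 1 ≤ K) (ε : ℝ) (hε : 0 < ε) (hεK : ε ≤ 1 / (4 * K)) :
    (1 / ((K : ℝ) + 1 / K + ε) - 1 / ((K : ℝ) + 1 / K)) ^ 2 / (1 / ((K : ℝ) + 1 / K)) +
      ((1 / (K : ℝ) + ε) / ((K : ℝ) + 1 / K + ε) - (1 / (K : ℝ)) / ((K : ℝ) + 1 / K)) ^ 2 /
        ((1 / (K : ℝ)) / ((K : ℝ) + 1 / K)) +
      ((K : ℝ) - 1) *
        ((1 / ((K : ℝ) + 1 / K + ε) - 1 / ((K : ℝ) + 1 / K)) ^ 2 / (1 / ((K : ℝ) + 1 / K))) ≤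
    5 * ε ^ 2 := by
  have hk : (1 : ℝ) ≤ K := by exact_mod_cast hK
  have hk0 : (0 : ℝ) < K := by linarith
  have hA : (0 : ℝ) < (K : ℝ) + 1 / K := by positivity
  have hAε : (0 : ℝ) < (K : ℝ) + 1 / K + ε := by linarith
  have key : (1 / ((K : ℝ) + 1 / K + ε) - 1 / ((K : ℝ) + 1 / K)) ^ 2 / (1 / ((K : ℝ) + 1 / K)) +
      ((1 / (K : ℝ) + ε) / ((K : ℝ) + 1 / K + ε) - (1 / (K : ℝ)) / ((K : ℝ) + 1 / K)) ^ 2 /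
        ((1 / (K : ℝ)) / ((K : ℝ) + 1 / K)) +
      ((K : ℝ) - 1) *
        ((1 / ((K : ℝ) + 1 / K + ε) - 1 / ((K : ℝ) + 1 / K)) ^ 2 / (1 / ((K : ℝ) + 1 / K))) =
      ε ^ 2 * ((K : ℝ) + (K : ℝ) ^ 3) / (((K : ℝ) + 1 / K) * ((K : ℝ) + 1 / K + ε) ^ 2) := by
    field_simp
    ring
  rw [key, div_le_iff₀ (by positivity)]
  have hu : (K:ℝ) * (1/K) = 1 := mul_one_div_cancel (ne_of_gt hk0)
  have h1 : (K:ℝ) + (K:ℝ)^3 ≤ ((K:ℝ)+1/K)^3 := by nlinarith [one_div_pos.mpr hk0, sq_nonneg (1/(K:ℝ))]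
  have h2 : ((K:ℝ)+1/K)^3 ≤ ((K:ℝ)+1/K)*((K:ℝ)+1/K+ε)^2 := by
    have := pow_le_pow_left₀ hA.le (by linarith : (K:ℝ)+1/K ≤ (K:ℝ)+1/K+ε) 2
    nlinarith
  have h3 := mul_le_mul_of_nonneg_left (h1.trans h2) (sq_nonneg ε)
  nlinarith [mul_nonneg (sq_nonneg ε) (mul_pos hA (by positivity : (0:ℝ) < ((K:ℝ)+1/K+ε)^2)).le]
end

section
/- Let K ≥ 1 and 0 < ε ≤ 1/(4K). Consider probability distributions p, q on {0, ℓ, s₁,...,s_{K−1}} with p_0 = 1/(2+ε), p_ℓ = (1/K + ε)/(2+ε), p_{s_i} = (1/K)/(2+ε), and q_0 = 1/2, q_ℓ = q_{s_i} = 1/(2K). Then ∑_j (p_j − q_j)²/q_j ≤ 5Kε². -/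
theorem stmt_12 (K : ℕ) (hK : 1 ≤ K) (ε : ℝ) (hε : 0 < ε) (hεK : ε ≤ 1 / (4 * K)) :
    (1 / (2 + ε) - 1 / 2) ^ 2 / (1 / 2) +
      ((1 / (K : ℝ) + ε) / (2 + ε) - 1 / (2 * K)) ^ 2 / (1 / (2 * (K : ℝ))) +
      ((K : ℝ) - 1) *
        (((1 / (K : ℝ)) / (2 + ε) - 1 / (2 * K)) ^ 2 / (1 / (2 * (K : ℝ)))) ≤
    5 * K * ε ^ 2 := by
  have hk : (1:ℝ) ≤ (K:ℝ) := by exact_mod_cast hK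
  have hk0 : (0:ℝ) < (K:ℝ) := by linarith
  have hD : (0:ℝ) < 2 + ε := by linarith
  have key : (1 / (2 + ε) - 1 / 2) ^ 2 / (1 / 2) +
      ((1 / (K : ℝ) + ε) / (2 + ε) - 1 / (2 * K)) ^ 2 / (1 / (2 * (K : ℝ))) +
      ((K : ℝ) - 1) *
        (((1 / (K : ℝ)) / (2 + ε) - 1 / (2 * K)) ^ 2 / (1 / (2 * (K : ℝ)))) =
      ε ^ 2 * (2 * K - 1) / (2 + ε) ^ 2 := by
    field_simp
    ring
  rw [key, div_le_iff₀ (by positivity)]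
  nlinarith [pow_pos hε 2, mul_pos hk0 (pow_pos hε 2), sq_nonneg (2 + ε)]
end
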